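/- arXiv:2506.17803 — 2 statements merged into one kernel-verified Lean document; each statement's English description precedes it below -/
import Mathlib

section
/- Consider a K-user broadcast channel N(y1,...,yK|x) with message sets {1,...,M_k} and side-information sets W_k = {k+1, k+2, ..., K} for all k ∈ [K], and fully ((K+1)-partite) NS-assisted coding schemes. Then η*_NS(SI = ∅) = η*_NS(SI = [K]), and consequently η*_NS(SI = 𝒦) = η*_NS(SI = 𝒦') for all subsets 𝒦, 𝒦' ⊆ [K]. -/
/-!
A box using side information is turned into one that needs none by a one-time pad: the box draws
a uniform key `t`, feeds its transmitter part the messages `w + t`, computes the side information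
`(w_j + t_j)_{j ∈ W k}` of user `k` from that same input, and subtracts `t` from the decoded
messages. On honest inputs this only relabels the messages, so the success probability is
unchanged. The new box is non-signaling because every `W k` consists of later users: for any set
`U` of users, the key `t_{k₀}` of its first user `k₀` enters the input of no user in `U`, so
averaging over it makes the output of `k₀` uniform and independent of the others; hence the outputs
of `U` are jointly uniform whatever the inputs. Conversely a box that ignores side information
serves for every `𝒦`, so all the optimal values coincide.
-/

open scoped BigOperators Classical
open Finset Filter

noncomputable section

/-- A `K`-user broadcast channel kernel `N(y_1,…,y_K|x)`. -/
def IsKUserKernel {K : ℕ} {X : Type} {Y : Fin K → Type} [∀ k, Fintype (Y k)]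
    (N : X → (∀ k, Y k) → ℝ) : Prop :=
  (∀ x y, 0 ≤ N x y) ∧ ∀ x, ∑ y : ∀ k, Y k, N x y = 1

/-- A multipartite non-signaling box over an index set `I` of parties, with input
alphabets `A i` and output alphabets `B i`: for every subset `T` of the parties, the
marginal obtained by summing over the outputs of the parties not in `T` is unchanged
when the inputs of the parties not in `T` are altered. -/
def IsNSBoxFam {I : Type} [Fintype I] [DecidableEq I] {A B : I → Type}
    [∀ i, Fintype (A i)] [∀ i, Fintype (B i)]
    (Z : (∀ i, A i) → (∀ i, B i) → ℝ) : Prop :=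
  (∀ a b, 0 ≤ Z a b) ∧
  (∀ a, ∑ b, Z a b = 1) ∧
  ∀ (T : Finset I) (a a' : ∀ i, A i), (∀ i ∈ T, a i = a' i) →
    ∀ bT : ∀ i, B i,
      ∑ b ∈ Finset.univ.filter (fun b : ∀ i, B i => ∀ i ∈ T, b i = bT i), Z a b =
      ∑ b ∈ Finset.univ.filter (fun b : ∀ i, B i => ∀ i ∈ T, b i = bT i), Z a' b

variable {K : ℕ}

/-- The side-information alphabet of user `k` when the active side-information set is
`𝒦`: it is `S_k = Π_{j ∈ W k} {1,…,M_j}` if `k ∈ 𝒦` and (essentially) trivial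
otherwise. -/
def SideInfo (M : Fin K → ℕ) (W : Fin K → Finset (Fin K)) (𝒦 : Finset (Fin K))
    (k : Fin K) : Type :=
  ∀ j : {j : Fin K // j ∈ W k ∧ k ∈ 𝒦}, Fin (M j.1)

instance (M : Fin K → ℕ) (W : Fin K → Finset (Fin K)) (𝒦 : Finset (Fin K)) (k : Fin K) :
    Fintype (SideInfo M W 𝒦 k) := by
  unfold SideInfo; infer_instance

/-- Input alphabets of the `K+1` parties (`none` = transmitter, `some k` = user `k`). -/
def InA (X : Type) (Y : Fin K → Type) (M : Fin K → ℕ) (W : Fin K → Finset (Fin K))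
    (𝒦 : Finset (Fin K)) : Option (Fin K) → Type
  | none => ∀ k, Fin (M k)
  | some k => Y k × SideInfo M W 𝒦 k

instance (X : Type) (Y : Fin K → Type) [∀ k, Fintype (Y k)] (M : Fin K → ℕ)
    (W : Fin K → Finset (Fin K)) (𝒦 : Finset (Fin K)) (i : Option (Fin K)) :
    Fintype (InA X Y M W 𝒦 i) := by
  cases i with
  | none => exact (inferInstance : Fintype (∀ k, Fin (M k)))
  | some k => exact (inferInstance : Fintype (Y k × SideInfo M W 𝒦 k))

/-- Output alphabets of the `K+1` parties. -/
def OutA (X : Type) (M : Fin K → ℕ) : Option (Fin K) → Type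
  | none => X
  | some k => Fin (M k)

instance (X : Type) [Fintype X] (M : Fin K → ℕ) (i : Option (Fin K)) :
    Fintype (OutA X M i) := by
  cases i with
  | none => exact (inferInstance : Fintype X)
  | some k => exact (inferInstance : Fintype (Fin (M k)))

/-- The tuple of inputs fed to the box when the messages are `w` and the channel
outputs are `y`: the transmitter inputs `w`, and user `k` inputs `y k` together with
its available side information `(w_j)_{j ∈ W k}`. -/
def mkIn {X : Type} {Y : Fin K → Type} {M : Fin K → ℕ} {W : Fin K → Finset (Fin K)}
    {𝒦 : Finset (Fin K)} (w : ∀ k, Fin (M k)) (y : ∀ k, Y k) :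
    ∀ i, InA X Y M W 𝒦 i
  | none => w
  | some k => (y k, fun j => w j.1)

/-- The tuple of outputs corresponding to the channel input `x` and correct decoding
of all messages `w`. -/
def mkOut {X : Type} {M : Fin K → ℕ} (x : X) (w : ∀ k, Fin (M k)) :
    ∀ i, OutA X M i
  | none => x
  | some k => w k

/-- Joint success probability of a fully NS-assisted coding scheme with side
information at the users in `𝒦`. -/
def etaK {X : Type} [Fintype X] {Y : Fin K → Type} [∀ k, Fintype (Y k)]
    (M : Fin K → ℕ) (W : Fin K → Finset (Fin K)) (𝒦 : Finset (Fin K))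
    (N : X → (∀ k, Y k) → ℝ)
    (Z : (∀ i, InA X Y M W 𝒦 i) → (∀ i, OutA X M i) → ℝ) : ℝ :=
  (∏ k, (M k : ℝ))⁻¹ * ∑ w : ∀ k, Fin (M k), ∑ x : X, ∑ y : ∀ k, Y k,
    N x y * Z (mkIn w y) (mkOut x w)

/-- `η*_NS(SI = 𝒦)`: the optimal joint success probability over fully NS-assisted
coding schemes with side information available to the users in `𝒦`. -/
def etaStarK (X : Type) [Fintype X] (Y : Fin K → Type) [∀ k, Fintype (Y k)]
    (M : Fin K → ℕ) (W : Fin K → Finset (Fin K)) (N : X → (∀ k, Y k) → ℝ)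
    (𝒦 : Finset (Fin K)) : ℝ :=
  sSup {e : ℝ | ∃ Z : (∀ i, InA X Y M W 𝒦 i) → (∀ i, OutA X M i) → ℝ,
    IsNSBoxFam Z ∧ e = etaK M W 𝒦 N Z}

theorem Fintype.sum_sum_update {ι R : Type*} [Fintype ι] [DecidableEq ι] {β : ι → Type*}
    [∀ i, Fintype (β i)] [AddCommMonoid R] (i : ι) (f : (∀ j, β j) → R) :
    ∑ t, ∑ s : β i, f (Function.update t i s) = Fintype.card (β i) • ∑ t, f t := by
  have swap : Function.Involutive fun p : (∀ j, β j) × β i => (Function.update p.1 i p.2, p.1 i) :=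
    fun p => by simp
  rw [← Fintype.sum_prod_type', ← Equiv.sum_comp swap.toPerm]
  simp [Fintype.sum_prod_type, Finset.smul_sum]

section Marginal

variable {I α : Type} [Fintype I] [DecidableEq I] {B : I → Type} [∀ i, Fintype (B i)]

def marginal (Z : α → (∀ i, B i) → ℝ) (T : Finset I) (a : α) (c : ∀ i, B i) : ℝ :=
  ∑ b ∈ univ.filter (fun b : ∀ i, B i => ∀ i ∈ T, b i = c i), Z a b

theorem marginal_empty (Z : α → (∀ i, B i) → ℝ) (a : α) (c : ∀ i, B i) :
    marginal Z ∅ a c = ∑ b, Z a b := by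
  simp [marginal]

theorem sum_marginal_insert_update (Z : α → (∀ i, B i) → ℝ) {T : Finset I}
    {i : I} (hi : i ∉ T) (a : α) (c : ∀ i, B i) :
    ∑ v : B i, marginal Z (insert i T) a (Function.update c i v) = marginal Z T a c := by
  unfold marginal
  rw [← Finset.sum_fiberwise _ (fun b => b i) (Z a)]
  refine Finset.sum_congr rfl fun v _ => Finset.sum_congr ?_ fun _ _ => rfl
  ext b
  simp only [Finset.mem_filter, Finset.mem_univ, true_and, Finset.forall_mem_insert,
    Function.update_self]
  rw [and_comm]
  refine and_congr_left fun _ => forall₂_congr fun j hj => ?_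
  rw [Function.update_of_ne (ne_of_mem_of_not_mem hj hi)]

theorem marginal_comp_piCongrRight (Z : α → (∀ i, B i) → ℝ) (e : ∀ i, B i ≃ B i)
    (T : Finset I) (a : α) (c : ∀ i, B i) :
    marginal (fun a b => Z a (Equiv.piCongrRight e b)) T a c =
      marginal Z T a (Equiv.piCongrRight e c) := by
  refine Finset.sum_equiv (Equiv.piCongrRight e) (fun b => ?_) fun _ _ => rfl
  simp [(e _).injective.eq_iff]

end Marginal

namespace IsNSBoxFam

variable {I : Type} [Fintype I] [DecidableEq I] {A B : I → Type} [∀ i, Fintype (A i)]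
  [∀ i, Fintype (B i)] {Z : (∀ i, A i) → (∀ i, B i) → ℝ}

theorem marginal_eq (hZ : IsNSBoxFam Z) (T : Finset I) {a a' : ∀ i, A i}
    (h : ∀ i ∈ T, a i = a' i) (c : ∀ i, B i) : marginal Z T a c = marginal Z T a' c :=
  hZ.2.2 T a a' h c

theorem comp_inputs {A' : I → Type} [∀ i, Fintype (A' i)] (hZ : IsNSBoxFam Z)
    (f : ∀ i, A' i → A i) : IsNSBoxFam fun (a : ∀ i, A' i) b => Z (fun i => f i (a i)) b :=
  ⟨fun _ _ => hZ.1 _ _, fun _ => hZ.2.1 _,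
    fun T _ _ h c => hZ.2.2 T _ _ (fun i hi => congrArg (f i) (h i hi)) c⟩

end IsNSBoxFam

section SideInformation

variable {X : Type} {Y : Fin K → Type} {M : Fin K → ℕ} {W : Fin K → Finset (Fin K)}

def forgetSideInfo (𝒦 : Finset (Fin K)) : ∀ i, InA X Y M W 𝒦 i → InA X Y M W ∅ i
  | none => id
  | some _ => fun p => (p.1, fun j => absurd j.2.2 (Finset.notMem_empty _))

theorem forgetSideInfo_mkIn (𝒦 : Finset (Fin K)) (w : ∀ k, Fin (M k)) (y : ∀ k, Y k) :
    (fun i => forgetSideInfo 𝒦 i (mkIn (X := X) (W := W) w y i)) = mkIn w y := by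
  funext i
  cases i with
  | none => rfl
  | some k => exact Prod.ext rfl (funext fun j => absurd j.2.2 (Finset.notMem_empty _))

theorem etaK_comp_forgetSideInfo [Fintype X] [∀ k, Fintype (Y k)] (𝒦 : Finset (Fin K))
    (N : X → (∀ k, Y k) → ℝ) (Z : (∀ i, InA X Y M W ∅ i) → (∀ i, OutA X M i) → ℝ) :
    etaK M W 𝒦 N (fun a b => Z (fun i => forgetSideInfo 𝒦 i (a i)) b) = etaK M W ∅ N Z := by
  simp only [etaK, forgetSideInfo_mkIn]

def shiftedInputs (𝒦 : Finset (Fin K)) (a : ∀ i, InA X Y M W ∅ i) (t : ∀ k, Fin (M k)) :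
    ∀ i, InA X Y M W 𝒦 i
  | none => fun k => a none k + t k
  | some k => ((a (some k)).1, fun j => a none j.1 + t j.1)

theorem shiftedInputs_mkIn (𝒦 : Finset (Fin K)) (w t : ∀ k, Fin (M k)) (y : ∀ k, Y k) :
    shiftedInputs (X := X) (W := W) 𝒦 (mkIn w y) t = mkIn (w + t) y := by
  funext i
  cases i <;> rfl

theorem shiftedInputs_update_apply_some (𝒦 : Finset (Fin K)) (hW : ∀ k, ∀ j ∈ W k, k < j)
    (a : ∀ i, InA X Y M W ∅ i) (t : ∀ k, Fin (M k)) {k₀ k : Fin K} (hk : k₀ ≤ k)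
    (v : Fin (M k₀)) :
    shiftedInputs 𝒦 a (Function.update t k₀ v) (some k) = shiftedInputs 𝒦 a t (some k) := by
  refine Prod.ext rfl (funext fun j => ?_)
  show a none j.1 + Function.update t k₀ v j.1 = a none j.1 + t j.1
  rw [Function.update_of_ne (hk.trans_lt (hW k j.1 j.2.1)).ne']

theorem shiftedInputs_apply_congr (𝒦 : Finset (Fin K)) {a a' : ∀ i, InA X Y M W ∅ i}
    (h₀ : a none = a' none) {i : Option (Fin K)} (hi : a i = a' i) (t : ∀ k, Fin (M k)) :
    shiftedInputs 𝒦 a t i = shiftedInputs 𝒦 a' t i := by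
  cases i with
  | none => rw [shiftedInputs, shiftedInputs, h₀]
  | some _ => rw [shiftedInputs, shiftedInputs, h₀, hi]

variable [∀ k, NeZero (M k)]

theorem prod_cast_ne_zero : (∏ k, (M k : ℝ)) ≠ 0 :=
  Finset.prod_ne_zero_iff.2 fun _ _ => Nat.cast_ne_zero.2 (NeZero.ne _)

def shiftOutputs (t : ∀ k, Fin (M k)) : (∀ i, OutA X M i) ≃ (∀ i, OutA X M i) :=
  Equiv.piCongrRight fun
    | none => Equiv.refl X
    | some k => (Equiv.addRight (t k) : Equiv.Perm (Fin (M k)))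

theorem shiftOutputs_mkOut (w t : ∀ k, Fin (M k)) (x : X) :
    shiftOutputs t (mkOut x w) = mkOut x (w + t) := by
  funext i
  cases i <;> rfl

theorem sum_comp_shiftOutputs_update (F : (∀ i, OutA X M i) → ℝ) (t : ∀ k, Fin (M k))
    (k₀ : Fin K) (c : ∀ i, OutA X M i) :
    ∑ v : Fin (M k₀), F (shiftOutputs (Function.update t k₀ v) c) =
      ∑ v : Fin (M k₀), F (Function.update (shiftOutputs t c) (some k₀) v) := by
  let c₀ : Fin (M k₀) := c (some k₀)
  refine Fintype.sum_equiv (Equiv.addLeft c₀) _ _ fun v => congrArg F (funext fun i => ?_)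
  rcases i with _ | k
  · rfl
  · by_cases hk : k = k₀
    · subst hk
      exact (congrArg (c₀ + ·) (Function.update_self k v t)).trans
        (Function.update_self (β := fun i => OutA X M i) (some k) (c₀ + v) _).symm
    · let cₖ : Fin (M k) := c (some k)
      exact (congrArg (cₖ + ·) (Function.update_of_ne hk v t)).trans
        (Function.update_of_ne (β := fun i => OutA X M i) (a := some k) (a' := some k₀)
          (by simpa using hk) (c₀ + v) (shiftOutputs t c)).symm

theorem sum_marginal_image_some_shift [Fintype X] [∀ k, Fintype (Y k)] {𝒦 : Finset (Fin K)}
    (hW : ∀ k, ∀ j ∈ W k, k < j) {Z : (∀ i, InA X Y M W 𝒦 i) → (∀ i, OutA X M i) → ℝ}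
    (hZ : IsNSBoxFam Z) (U : Finset (Fin K)) (a : ∀ i, InA X Y M W ∅ i)
    (c : ∀ i, OutA X M i) :
    ∑ t, marginal Z (U.image some) (shiftedInputs 𝒦 a t) (shiftOutputs t c) =
      ∏ k ∈ Uᶜ, (M k : ℝ) := by
  induction U using Finset.induction_on_min with
  | empty =>
    simp [marginal_empty, hZ.2.1]
  | insert k₀ U hk₀ ih =>
    have hk₀U : k₀ ∉ U := fun h => lt_irrefl k₀ (hk₀ k₀ h)
    have hM₀ : (M k₀ : ℝ) ≠ 0 := Nat.cast_ne_zero.2 (NeZero.ne _)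
    set T := (insert k₀ U).image some
    refine mul_left_cancel₀ hM₀ ?_
    calc (M k₀ : ℝ) * ∑ t, marginal Z T (shiftedInputs 𝒦 a t) (shiftOutputs t c)
        = ∑ t, ∑ v : Fin (M k₀), marginal Z T (shiftedInputs 𝒦 a (Function.update t k₀ v))
            (shiftOutputs (Function.update t k₀ v) c) := by
          rw [Fintype.sum_sum_update k₀
            (fun t => marginal Z T (shiftedInputs 𝒦 a t) (shiftOutputs t c)),
            Fintype.card_fin, nsmul_eq_mul]
      _ = ∑ t, ∑ v : Fin (M k₀), marginal Z T (shiftedInputs 𝒦 a t)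
            (shiftOutputs (Function.update t k₀ v) c) := by
          refine Fintype.sum_congr _ _ fun t => Fintype.sum_congr _ _ fun v => ?_
          refine hZ.marginal_eq T (fun i hi => ?_) _
          obtain ⟨k, hk, rfl⟩ := Finset.mem_image.1 hi
          refine shiftedInputs_update_apply_some 𝒦 hW a t ?_ v
          rcases Finset.mem_insert.1 hk with rfl | hk
          exacts [le_rfl, (hk₀ k hk).le]
      _ = ∑ t, ∑ v : Fin (M k₀), marginal Z (insert (some k₀) (U.image some))
            (shiftedInputs 𝒦 a t) (Function.update (shiftOutputs t c) (some k₀) v) := by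
          simp only [T, Finset.image_insert, sum_comp_shiftOutputs_update]
      _ = ∏ k ∈ Uᶜ, (M k : ℝ) := by
          rw [← ih]
          exact Fintype.sum_congr _ _ fun t =>
            sum_marginal_insert_update Z (T := U.image some) (i := some k₀) (by simpa) _ _
      _ = M k₀ * ∏ k ∈ (insert k₀ U)ᶜ, (M k : ℝ) := by
          rw [Finset.compl_insert,
            Finset.mul_prod_erase _ (fun k => (M k : ℝ)) (Finset.mem_compl.2 hk₀U)]

def twirl (𝒦 : Finset (Fin K)) (Z : (∀ i, InA X Y M W 𝒦 i) → (∀ i, OutA X M i) → ℝ) :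
    (∀ i, InA X Y M W ∅ i) → (∀ i, OutA X M i) → ℝ :=
  fun a b => (∏ k, (M k : ℝ))⁻¹ * ∑ t, Z (shiftedInputs 𝒦 a t) (shiftOutputs t b)

theorem marginal_twirl [Fintype X] (𝒦 : Finset (Fin K))
    (Z : (∀ i, InA X Y M W 𝒦 i) → (∀ i, OutA X M i) → ℝ) (T : Finset (Option (Fin K)))
    (a : ∀ i, InA X Y M W ∅ i) (c : ∀ i, OutA X M i) :
    marginal (twirl 𝒦 Z) T a c =
      (∏ k, (M k : ℝ))⁻¹ * ∑ t, marginal Z T (shiftedInputs 𝒦 a t) (shiftOutputs t c) := by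
  simp only [marginal, twirl, ← Finset.mul_sum]
  rw [Finset.sum_comm]
  congr 1
  exact Fintype.sum_congr _ _ fun t =>
    marginal_comp_piCongrRight Z _ T (shiftedInputs 𝒦 a t) c

theorem isNSBoxFam_twirl [Fintype X] [∀ k, Fintype (Y k)] {𝒦 : Finset (Fin K)}
    (hW : ∀ k, ∀ j ∈ W k, k < j) {Z : (∀ i, InA X Y M W 𝒦 i) → (∀ i, OutA X M i) → ℝ}
    (hZ : IsNSBoxFam Z) : IsNSBoxFam (twirl 𝒦 Z) := by
  refine ⟨fun a b => ?_, fun a => ?_, fun T a a' h c => ?_⟩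
  · exact mul_nonneg (inv_nonneg.2 (Finset.prod_nonneg fun k _ => Nat.cast_nonneg (M k)))
      (Finset.sum_nonneg fun t _ => hZ.1 _ _)
  · simp only [twirl, ← Finset.mul_sum]
    rw [Finset.sum_comm]
    simp only [Equiv.sum_comp (shiftOutputs _) (Z _), hZ.2.1, Finset.sum_const, Finset.card_univ,
      Fintype.card_pi, Fintype.card_fin, nsmul_eq_mul, mul_one, Nat.cast_prod]
    exact inv_mul_cancel₀ prod_cast_ne_zero
  · change marginal (twirl 𝒦 Z) T a c = marginal (twirl 𝒦 Z) T a' c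
    rw [marginal_twirl, marginal_twirl]
    by_cases hT : none ∈ T
    · exact congrArg _ (Fintype.sum_congr _ _ fun t => hZ.marginal_eq T
        (fun i hi => shiftedInputs_apply_congr 𝒦 (h none hT) (h i hi) t) _)
    · obtain ⟨U, rfl⟩ : ∃ U, T = U.image some :=
        ⟨Finset.eraseNone T, by rw [Finset.image_some_eraseNone, Finset.erase_eq_of_notMem hT]⟩
      rw [sum_marginal_image_some_shift hW hZ, sum_marginal_image_some_shift hW hZ]

theorem twirl_mkIn_mkOut (𝒦 : Finset (Fin K))
    (Z : (∀ i, InA X Y M W 𝒦 i) → (∀ i, OutA X M i) → ℝ) (w : ∀ k, Fin (M k))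
    (y : ∀ k, Y k) (x : X) :
    twirl 𝒦 Z (mkIn w y) (mkOut x w) = (∏ k, (M k : ℝ))⁻¹ * ∑ u, Z (mkIn u y) (mkOut x u) := by
  simp only [twirl, shiftedInputs_mkIn, shiftOutputs_mkOut]
  exact congrArg _ (Equiv.sum_comp (Equiv.addLeft w) fun u => Z (mkIn u y) (mkOut x u))

theorem etaK_twirl [Fintype X] [∀ k, Fintype (Y k)] (𝒦 : Finset (Fin K))
    (N : X → (∀ k, Y k) → ℝ) (Z : (∀ i, InA X Y M W 𝒦 i) → (∀ i, OutA X M i) → ℝ) :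
    etaK M W ∅ N (twirl 𝒦 Z) = etaK M W 𝒦 N Z := by
  have hw : ∀ w, ∑ x, ∑ y, N x y * twirl 𝒦 Z (mkIn w y) (mkOut x w) =
      (∏ k, (M k : ℝ))⁻¹ * ∑ u, ∑ x, ∑ y, N x y * Z (mkIn u y) (mkOut x u) := by
    intro w
    simp only [twirl_mkIn_mkOut, Finset.mul_sum, mul_left_comm (N _ _)]
    exact (Finset.sum_comm.trans (Fintype.sum_congr _ _ fun x => Finset.sum_comm)).symm
  rw [etaK, etaK, Fintype.sum_congr _ _ hw, Finset.sum_const, Finset.card_univ, nsmul_eq_mul,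
    Fintype.card_pi, Nat.cast_prod]
  simp only [Fintype.card_fin]
  rw [mul_inv_cancel_left₀ prod_cast_ne_zero]

theorem etaStarK_eq_etaStarK_empty [Fintype X] [∀ k, Fintype (Y k)]
    (hW : ∀ k, ∀ j ∈ W k, k < j) (N : X → (∀ k, Y k) → ℝ) (𝒦 : Finset (Fin K)) :
    etaStarK X Y M W N 𝒦 = etaStarK X Y M W N ∅ := by
  unfold etaStarK
  congr 1
  ext e
  constructor
  · rintro ⟨Z, hZ, rfl⟩
    exact ⟨twirl 𝒦 Z, isNSBoxFam_twirl hW hZ, (etaK_twirl 𝒦 N Z).symm⟩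
  · rintro ⟨Z, hZ, rfl⟩
    exact ⟨_, hZ.comp_inputs (forgetSideInfo 𝒦), (etaK_comp_forgetSideInfo 𝒦 N Z).symm⟩

end SideInformation

theorem stmt8_general (X : Type) [Fintype X] (Y : Fin K → Type) [∀ k, Fintype (Y k)]
    (M : Fin K → ℕ) (hM : ∀ k, 0 < M k)
    (N : X → (∀ k, Y k) → ℝ)
    (W : Fin K → Finset (Fin K))
    (hW : ∀ k, W k = Finset.univ.filter (fun j => k < j)) :
    etaStarK X Y M W N ∅ = etaStarK X Y M W N Finset.univ ∧
    ∀ 𝒦 𝒦' : Finset (Fin K), etaStarK X Y M W N 𝒦 = etaStarK X Y M W N 𝒦' := by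
  have : ∀ k, NeZero (M k) := fun k => ⟨(hM k).ne'⟩
  have hW' : ∀ k, ∀ j ∈ W k, k < j := fun k j hj => by simpa [hW] using hj
  have h := etaStarK_eq_etaStarK_empty (M := M) hW' N
  exact ⟨(h _).symm, fun 𝒦 𝒦' => (h 𝒦).trans (h 𝒦').symm⟩

/-- if the side-information sets are `W_k = {k+1, …, K}` for all
`k ∈ [K]`, then the optimal NS-assisted joint success probability with no side
information equals the one with full side information; consequently it is the same for
every availability pattern `𝒦 ⊆ [K]`. -/
theorem stmt8 (X : Type) [Fintype X] (Y : Fin K → Type) [∀ k, Fintype (Y k)]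
    (M : Fin K → ℕ) (hM : ∀ k, 0 < M k)
    (N : X → (∀ k, Y k) → ℝ) (hN : IsKUserKernel N)
    (W : Fin K → Finset (Fin K))
    (hW : ∀ k, W k = Finset.univ.filter (fun j => k < j)) :
    etaStarK X Y M W N ∅ = etaStarK X Y M W N Finset.univ ∧
    ∀ 𝒦 𝒦' : Finset (Fin K), etaStarK X Y M W N 𝒦 = etaStarK X Y M W N 𝒦' :=
  stmt8_general X Y M hM N W hW
end
end

section
/- For every 2-user broadcast channel N on finite alphabets and all M1, M2 ∈ ℕ, the supremum of the joint success probability over coding schemes with bipartite NS assistance between the transmitter and user 1 is unchanged when user 1 is additionally given message W2 as side information: sup over Z ∈ Z^{NS-1}(M1, M2, N) of η(Z) equals sup over Z ∈ Z^{NS-1,SI-1}(M1, M2, N) of η(Z). -/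
/-! Ignoring the side information gives one inclusion of the sets of achievable success
probabilities.  Conversely, given a box `Z` in which user 1 also receives `w₂`, let the
transmitter pass `w₂` on itself and average over a common shift `s` of the message `w₁`
and of the decoded value:
`Z'((w₁, w₂), y, x, b) = M₁⁻¹ ∑ₛ Z((w₁ + s, w₂), (y, w₂), x, b + s)`.
The shift makes user 1's output uniform whatever the transmitter's input, so `Z'` is again
non-signaling, and it does not change `∑_{w₁} Z(…, x, w₁)`, on which alone the success
probability depends. -/

open scoped BigOperators Classical
open Finset Filter

noncomputable section

/-- A stochastic kernel. -/
def IsKernel {A B : Type*} [Fintype B] (D : A → B → ℝ) : Prop :=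
  (∀ a b, 0 ≤ D a b) ∧ ∀ a, ∑ b, D a b = 1

/-- A 2-user broadcast channel kernel `N(y1,y2|x)`. -/
def IsBCKernel {X Y1 Y2 : Type*} [Fintype Y1] [Fintype Y2] (N : X → Y1 → Y2 → ℝ) : Prop :=
  (∀ x y1 y2, 0 ≤ N x y1 y2) ∧ ∀ x, ∑ y1, ∑ y2, N x y1 y2 = 1

/-- Bipartite non-signaling box: party 1 has input `a1`, output `b1`;
party 2 has input `a2`, output `b2`. -/
def IsNSBox {A1 A2 B1 B2 : Type*} [Fintype B1] [Fintype B2]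
    (Z : A1 → A2 → B1 → B2 → ℝ) : Prop :=
  (∀ a1 a2 b1 b2, 0 ≤ Z a1 a2 b1 b2) ∧
  (∀ a1 a2, ∑ b1, ∑ b2, Z a1 a2 b1 b2 = 1) ∧
  (∀ a1 a2 a2' b1, ∑ b2, Z a1 a2 b1 b2 = ∑ b2, Z a1 a2' b1 b2) ∧
  (∀ a1 a1' a2 b2, ∑ b1, Z a1 a2 b1 b2 = ∑ b1, Z a1' a2 b1 b2)

/-- Joint success probability of an NS-1 scheme `Z1 × D2`. -/
def etaNS1 {X Y1 Y2 : Type*} [Fintype X] [Fintype Y1] [Fintype Y2] (M1 M2 : ℕ)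
    (N : X → Y1 → Y2 → ℝ)
    (Z1 : (Fin M1 × Fin M2) → Y1 → X → Fin M1 → ℝ)
    (D2 : Y2 → Fin M2 → ℝ) : ℝ :=
  ((M1 : ℝ) * (M2 : ℝ))⁻¹ * ∑ w1, ∑ w2, ∑ x, ∑ y1, ∑ y2,
    N x y1 y2 * Z1 (w1, w2) y1 x w1 * D2 y2 w2

/-- Joint success probability of an NS-1,SI-1 scheme `Z1 × D2`
(user 1 additionally receives `W2` as side information). -/
def etaNS1SI {X Y1 Y2 : Type*} [Fintype X] [Fintype Y1] [Fintype Y2] (M1 M2 : ℕ)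
    (N : X → Y1 → Y2 → ℝ)
    (Z1 : (Fin M1 × Fin M2) → (Y1 × Fin M2) → X → Fin M1 → ℝ)
    (D2 : Y2 → Fin M2 → ℝ) : ℝ :=
  ((M1 : ℝ) * (M2 : ℝ))⁻¹ * ∑ w1, ∑ w2, ∑ x, ∑ y1, ∑ y2,
    N x y1 y2 * Z1 (w1, w2) (y1, w2) x w1 * D2 y2 w2

def shiftAverage {G W Y X : Type*} [AddGroup G] [Fintype G]
    (Z : G × W → Y × W → X → G → ℝ) : G × W → Y → X → G → ℝ :=
  fun w y x b => (Fintype.card G : ℝ)⁻¹ * ∑ s, Z (w.1 + s, w.2) (y, w.2) x (b + s)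

lemma IsNSBox.comp_input {A1 A1' A2 A2' B1 B2 : Type*} [Fintype B1] [Fintype B2]
    {Z : A1 → A2 → B1 → B2 → ℝ} (hZ : IsNSBox Z) (f : A1' → A1) (g : A2' → A2) :
    IsNSBox fun a1 a2 => Z (f a1) (g a2) := by
  obtain ⟨hnonneg, hsum, hsig₁, hsig₂⟩ := hZ
  exact ⟨fun _ _ => hnonneg _ _, fun _ _ => hsum _ _, fun _ _ _ => hsig₁ _ _ _,
    fun _ _ _ => hsig₂ _ _ _⟩

lemma isNSBox_of_isEmpty {A1 A2 B1 B2 : Type*} [Fintype B1] [Fintype B2] [IsEmpty A1]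
    (Z : A1 → A2 → B1 → B2 → ℝ) : IsNSBox Z :=
  ⟨isEmptyElim, isEmptyElim, isEmptyElim, isEmptyElim⟩

section ShiftAverage

variable {G W Y X : Type*} [AddGroup G] [Fintype G]
  {Z : G × W → Y × W → X → G → ℝ}

lemma sum_comp_add_right {M : Type*} [AddCommMonoid M] (f : G → M) (s : G) :
    ∑ g, f (g + s) = ∑ g, f g :=
  Equiv.sum_comp (Equiv.addRight s) f

lemma sum_comp_add_left {M : Type*} [AddCommMonoid M] (f : G → M) (s : G) :
    ∑ g, f (s + g) = ∑ g, f g :=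
  Equiv.sum_comp (Equiv.addLeft s) f

lemma inv_card_mul_card : (Fintype.card G : ℝ)⁻¹ * Fintype.card G = 1 :=
  inv_mul_cancel₀ (Nat.cast_ne_zero.mpr Fintype.card_ne_zero)

lemma sum_shiftAverage_message (w : G × W) (y : Y) (x : X) :
    ∑ b, shiftAverage Z w y x b =
      (Fintype.card G : ℝ)⁻¹ * ∑ s, ∑ b, Z (w.1 + s, w.2) (y, w.2) x b := by
  simp only [shiftAverage, ← Finset.mul_sum]
  rw [Finset.sum_comm]
  congr 1
  exact Finset.sum_congr rfl fun s _ => sum_comp_add_right _ s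

lemma sum_shiftAverage_output [Fintype X] (hZ : IsNSBox Z) (w : G × W) (y : Y) (b : G) :
    ∑ x, shiftAverage Z w y x b = (Fintype.card G : ℝ)⁻¹ := by
  have hshift (s : G) : ∑ x, Z (w.1 + s, w.2) (y, w.2) x (b + s) =
      ∑ x, Z w (y, w.2) x (b + s) := hZ.2.2.2 _ _ _ _
  simp only [shiftAverage, ← Finset.mul_sum]
  rw [Finset.sum_comm, Finset.sum_congr rfl fun s _ => hshift s,
    sum_comp_add_left (fun u => ∑ x, Z w (y, w.2) x u) b, Finset.sum_comm,
    hZ.2.1 w (y, w.2), mul_one]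

lemma sum_shiftAverage_diag (w₂ : W) (y : Y) (x : X) :
    ∑ g, shiftAverage Z (g, w₂) y x g = ∑ g, Z (g, w₂) (y, w₂) x g := by
  simp only [shiftAverage, ← Finset.mul_sum]
  rw [Finset.sum_comm, Finset.sum_congr rfl fun s _ =>
    sum_comp_add_right (fun g => Z (g, w₂) (y, w₂) x g) s, Finset.sum_const,
    Finset.card_univ, nsmul_eq_mul, ← mul_assoc, inv_card_mul_card, one_mul]

lemma IsNSBox.shiftAverage [Fintype X] (hZ : IsNSBox Z) : IsNSBox (shiftAverage Z) := by
  refine ⟨fun w y x b => ?_, fun w y => ?_, fun w y y' x => ?_, fun w w' y b => ?_⟩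
  · exact mul_nonneg (by positivity) (Finset.sum_nonneg fun s _ => hZ.1 _ _ _ _)
  · simp only [sum_shiftAverage_message, ← Finset.mul_sum]
    rw [Finset.sum_comm, Finset.sum_congr rfl fun s _ => hZ.2.1 _ _, Finset.sum_const,
      Finset.card_univ, nsmul_eq_mul, mul_one, inv_card_mul_card]
  · simp only [sum_shiftAverage_message]
    exact congrArg _ (Finset.sum_congr rfl fun s _ => hZ.2.2.1 _ _ _ _)
  · rw [sum_shiftAverage_output hZ, sum_shiftAverage_output hZ]

end ShiftAverage

lemma etaNS1_eq_etaNS1SI {X Y1 Y2 : Type*} [Fintype X] [Fintype Y1] [Fintype Y2]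
    {M1 M2 : ℕ} (N : X → Y1 → Y2 → ℝ) {Z1 : (Fin M1 × Fin M2) → Y1 → X → Fin M1 → ℝ}
    {Z1' : (Fin M1 × Fin M2) → (Y1 × Fin M2) → X → Fin M1 → ℝ} (D2 : Y2 → Fin M2 → ℝ)
    (hdiag : ∀ w2 y1 x, ∑ w1, Z1 (w1, w2) y1 x w1 = ∑ w1, Z1' (w1, w2) (y1, w2) x w1) :
    etaNS1 M1 M2 N Z1 D2 = etaNS1SI M1 M2 N Z1' D2 := by
  have hsum (Z : Fin M1 → Fin M2 → X → Y1 → ℝ) :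
      ∑ w1, ∑ w2, ∑ x, ∑ y1, ∑ y2, N x y1 y2 * Z w1 w2 x y1 * D2 y2 w2 =
        ∑ w2, ∑ x, ∑ y1, ∑ y2, N x y1 y2 * (∑ w1, Z w1 w2 x y1) * D2 y2 w2 := by
    simp only [Finset.mul_sum, Finset.sum_mul]
    rw [Finset.sum_comm]; congr! 1 with w2
    rw [Finset.sum_comm]; congr! 1 with x
    rw [Finset.sum_comm]; congr! 1 with y1
    exact Finset.sum_comm
  unfold etaNS1 etaNS1SI
  rw [hsum fun w1 w2 x y1 => Z1 (w1, w2) y1 x w1,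
    hsum fun w1 w2 x y1 => Z1' (w1, w2) (y1, w2) x w1]
  simp only [hdiag]

lemma exists_isNSBox_sum_diag_eq {X Y1 : Type*} [Fintype X] {M1 M2 : ℕ}
    {Z1' : (Fin M1 × Fin M2) → (Y1 × Fin M2) → X → Fin M1 → ℝ} (hZ1' : IsNSBox Z1') :
    ∃ Z1 : (Fin M1 × Fin M2) → Y1 → X → Fin M1 → ℝ, IsNSBox Z1 ∧
      ∀ w2 y1 x, ∑ w1, Z1 (w1, w2) y1 x w1 = ∑ w1, Z1' (w1, w2) (y1, w2) x w1 := by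
  rcases M1.eq_zero_or_pos with rfl | hM1
  · exact ⟨fun w y1 => Z1' w (y1, w.2), isNSBox_of_isEmpty _, fun _ _ _ => rfl⟩
  · have : NeZero M1 := ⟨hM1.ne'⟩
    exact ⟨shiftAverage Z1', hZ1'.shiftAverage, sum_shiftAverage_diag⟩

theorem stmt18_general {X Y1 Y2 : Type*} [Fintype X] [Fintype Y1] [Fintype Y2]
    (N : X → Y1 → Y2 → ℝ) (M1 M2 : ℕ) :
    sSup {e : ℝ | ∃ (Z1 : (Fin M1 × Fin M2) → Y1 → X → Fin M1 → ℝ)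
        (D2 : Y2 → Fin M2 → ℝ), IsNSBox Z1 ∧ IsKernel D2 ∧
        e = etaNS1 M1 M2 N Z1 D2} =
    sSup {e : ℝ | ∃ (Z1 : (Fin M1 × Fin M2) → (Y1 × Fin M2) → X → Fin M1 → ℝ)
        (D2 : Y2 → Fin M2 → ℝ), IsNSBox Z1 ∧ IsKernel D2 ∧
        e = etaNS1SI M1 M2 N Z1 D2} := by
  congr 1
  ext e
  constructor
  · rintro ⟨Z1, D2, hZ1, hD2, rfl⟩
    exact ⟨fun w p => Z1 w p.1, D2, hZ1.comp_input id Prod.fst, hD2, rfl⟩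
  · rintro ⟨Z1', D2, hZ1', hD2, rfl⟩
    obtain ⟨Z1, hZ1, hdiag⟩ := exists_isNSBox_sum_diag_eq hZ1'
    exact ⟨Z1, D2, hZ1, hD2, (etaNS1_eq_etaNS1SI N D2 hdiag).symm⟩

/-- over any 2-user broadcast channel, the optimal joint success
probability of NS-1 schemes (bipartite NS assistance between the transmitter and
user 1) is unchanged when user 1 is additionally given `W2` as side information. -/
theorem stmt18 {X Y1 Y2 : Type*} [Fintype X] [Fintype Y1] [Fintype Y2]
    (N : X → Y1 → Y2 → ℝ) (hN : IsBCKernel N) (M1 M2 : ℕ) :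
    sSup {e : ℝ | ∃ (Z1 : (Fin M1 × Fin M2) → Y1 → X → Fin M1 → ℝ)
        (D2 : Y2 → Fin M2 → ℝ), IsNSBox Z1 ∧ IsKernel D2 ∧
        e = etaNS1 M1 M2 N Z1 D2} =
    sSup {e : ℝ | ∃ (Z1 : (Fin M1 × Fin M2) → (Y1 × Fin M2) → X → Fin M1 → ℝ)
        (D2 : Y2 → Fin M2 → ℝ), IsNSBox Z1 ∧ IsKernel D2 ∧
        e = etaNS1SI M1 M2 N Z1 D2} :=
  stmt18_general N M1 M2
end
end
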